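/- arXiv:1812.02133 — 5 statements merged into one kernel-verified Lean document; each statement's English description precedes it below -/
import Mathlib

section
/- Let G be a locally compact second countable group acting on a complete probability space (X, μ) by measure-preserving transformations, and assume the action is measurable, i.e. the action map Φ : G × X → X, Φ(g, x) = gx, is measurable with respect to the completion of the product of the Borel σ-algebra of G (with a left Haar measure) and the σ-algebra of X. Then the action is continuous: for every measurable A ⊆ X and every ε > 0 there exists a neighborhood U of the identity in G such that μ(A Δ gA) ≤ ε for all g ∈ U. -/
open MeasureTheory Pointwise Topology
open scoped ENNReal symmDiff

/-! Replace the preimage of `A` under the action map by a measurable set `E` of the product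
σ-algebra; for almost every `g` the section `E_g` agrees a.e. with `g⁻¹A`. All sections of `E` are
measurable for a countably generated sub-σ-algebra, on which `μ` is separable, so countably many
sets `C n` approximate every section within `ε / 2`. The sets
`T n = {g | μ (g⁻¹A ∆ C n) < ε / 2}` then cover almost all of `G`, so one of them has positive
Haar measure and, by Steinhaus, `T n / T n` is a neighbourhood of `1`. For `g, h ∈ T n`,
`μ (A ∆ (g / h) • A) = μ (g⁻¹A ∆ h⁻¹A) < ε`. -/

/-- A neighborhood of the identity: a bounded (relatively compact) Borel subset of `G`
containing an open set that contains the identity. -/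
def IsIdNbhd (G : Type*) [TopologicalSpace G] [One G] [MeasurableSpace G] (U : Set G) : Prop :=
  MeasurableSet U ∧ IsCompact (closure U) ∧ ∃ V : Set G, IsOpen V ∧ (1 : G) ∈ V ∧ V ⊆ U

section

open MeasurableSpace

theorem MeasurableSet.exists_countable_prod_generateFrom {α β : Type*} [mα : MeasurableSpace α]
    [MeasurableSpace β] {s : Set (α × β)} (hs : MeasurableSet s) :
    ∃ 𝒞 : Set (Set β), 𝒞.Countable ∧ (∀ c ∈ 𝒞, MeasurableSet c) ∧
      MeasurableSet[mα.prod (generateFrom 𝒞)] s := by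
  rw [← generateFrom_prod] at hs
  induction s, hs using generateFrom_induction with
  | hC _ ht _ =>
    obtain ⟨u, hu, v, hv, rfl⟩ := ht
    exact ⟨{v}, Set.countable_singleton v, by simpa using hv,
      MeasurableSet.prod (mβ := generateFrom {v}) hu (measurableSet_generateFrom rfl)⟩
  | empty =>
    exact ⟨∅, Set.countable_empty, by simp, @MeasurableSet.empty _ (mα.prod (generateFrom ∅))⟩
  | compl _ _ ih =>
    obtain ⟨𝒞, h𝒞, h𝒞m, hs⟩ := ih
    exact ⟨𝒞, h𝒞, h𝒞m, hs.compl⟩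
  | iUnion _ _ ih =>
    choose 𝒞 h𝒞 h𝒞m hs using ih
    refine ⟨⋃ n, 𝒞 n, Set.countable_iUnion h𝒞, fun c hc => (Set.mem_iUnion.1 hc).elim (h𝒞m · c),
      .iUnion fun n => ?_⟩
    have hmono : mα.prod (generateFrom (𝒞 n)) ≤ mα.prod (generateFrom (⋃ n, 𝒞 n)) :=
      sup_le_sup_left (comap_mono (generateFrom_mono (Set.subset_iUnion 𝒞 n))) _
    exact hmono _ (hs n)

theorem exists_seq_forall_measure_symmDiff_lt_of_countable {β : Type*} [m0 : MeasurableSpace β]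
    (μ : Measure β) [IsFiniteMeasure μ] {𝒞 : Set (Set β)} (h𝒞 : 𝒞.Countable)
    (h𝒞m : ∀ c ∈ 𝒞, MeasurableSet c) :
    ∃ C : ℕ → Set β, (∀ n, MeasurableSet (C n)) ∧
      ∀ s, MeasurableSet[generateFrom 𝒞] s → ∀ δ : ℝ≥0∞, 0 < δ → ∃ n, μ (s ∆ C n) < δ := by
  have hle : generateFrom 𝒞 ≤ m0 := generateFrom_le h𝒞m
  let _ : MeasurableSpace β := generateFrom 𝒞
  have : CountablyGenerated β := ⟨𝒞, h𝒞, rfl⟩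
  have : IsFiniteMeasure (μ.trim hle) := isFiniteMeasure_trim hle
  obtain ⟨𝒜, h𝒜, h𝒜d⟩ := exists_countable_measureDense (μ.trim hle)
  obtain ⟨C, rfl⟩ := h𝒜.exists_eq_range h𝒜d.nonempty
  refine ⟨C, fun n => hle _ (h𝒜d.measurable _ ⟨n, rfl⟩), fun s hs δ hδ => ?_⟩
  obtain ⟨r, -, hr0, hrδ⟩ := ENNReal.lt_iff_exists_real_btwn.1 hδ
  obtain ⟨_, ⟨n, rfl⟩, hn⟩ :=
    h𝒜d.approx s hs (measure_ne_top _ _) r (ENNReal.ofReal_pos.1 hr0)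
  refine ⟨n, lt_trans ?_ hrδ⟩
  rwa [trim_measurableSet_eq hle (hs.symmDiff (h𝒜d.measurable _ ⟨n, rfl⟩))] at hn

theorem exists_seq_forall_measure_symmDiff_prodMk_lt {α β : Type*} [MeasurableSpace α]
    [MeasurableSpace β] (μ : Measure β) [IsFiniteMeasure μ] {E : Set (α × β)}
    (hE : MeasurableSet E) {δ : ℝ≥0∞} (hδ : 0 < δ) :
    ∃ C : ℕ → Set β, (∀ n, MeasurableSet (C n)) ∧ ∀ a, ∃ n, μ ((Prod.mk a ⁻¹' E) ∆ C n) < δ := by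
  obtain ⟨𝒞, h𝒞, h𝒞m, hE𝒞⟩ := hE.exists_countable_prod_generateFrom
  obtain ⟨C, hC, hCdense⟩ := exists_seq_forall_measure_symmDiff_lt_of_countable μ h𝒞 h𝒞m
  exact ⟨C, hC, fun a =>
    hCdense _ (measurable_prodMk_left (mβ := generateFrom 𝒞) (x := a) hE𝒞) δ hδ⟩

end

theorem measurable_measure_symmDiff_prodMk_left {α β : Type*} [MeasurableSpace α]
    [MeasurableSpace β] {ν : Measure β} [SFinite ν] {E : Set (α × β)} (hE : MeasurableSet E)
    {C : Set β} (hC : MeasurableSet C) :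
    Measurable fun a => ν ((Prod.mk a ⁻¹' E) ∆ C) := by
  simpa only [Set.preimage_symmDiff, Set.mk_preimage_prod_right (Set.mem_univ _)] using
    measurable_measure_prodMk_left (ν := ν) (hE.symmDiff (MeasurableSet.univ.prod hC))

theorem exists_div_mem_nhds_one_of_ae_exists_mem {G : Type*} [Group G] [TopologicalSpace G]
    [IsTopologicalGroup G] [LocallyCompactSpace G] [MeasurableSpace G] [BorelSpace G]
    (μ : Measure G) [μ.IsHaarMeasure] [μ.InnerRegular] {T : ℕ → Set G}
    (hT : ∀ n, NullMeasurableSet (T n) μ) (hcover : ∀ᵐ g ∂μ, ∃ n, g ∈ T n) :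
    ∃ n, T n / T n ∈ 𝓝 1 := by
  obtain ⟨n, hn⟩ : ∃ n, 0 < μ (T n) := by
    by_contra! hnull
    have hout : ∀ᵐ g ∂μ, g ∉ ⋃ n, T n := measure_eq_zero_iff_ae_notMem.1 <|
      measure_iUnion_null fun n => nonpos_iff_eq_zero.1 (hnull n)
    have : (ae μ).NeBot := ae_neBot.2 (NeZero.ne μ)
    obtain ⟨g, ⟨n, hg⟩, hg'⟩ := (hcover.and hout).exists
    exact hg' (Set.mem_iUnion_of_mem n hg)
  obtain ⟨S, hST, hS, hSae⟩ := (hT n).exists_measurable_subset_ae_eq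
  refine ⟨n, Filter.mem_of_superset ?_ (Set.div_subset_div hST hST)⟩
  exact Measure.div_mem_nhds_one_of_haar_pos μ S hS (by rwa [measure_congr hSae])

theorem exists_isIdNbhd_subset {G : Type*} [TopologicalSpace G] [R1Space G]
    [WeaklyLocallyCompactSpace G] [One G] [MeasurableSpace G] [OpensMeasurableSpace G]
    {s : Set G} (hs : s ∈ 𝓝 1) : ∃ U, IsIdNbhd G U ∧ U ⊆ s := by
  obtain ⟨K, hK, hK1⟩ := exists_compact_mem_nhds (1 : G)
  refine ⟨interior (s ∩ K), ⟨isOpen_interior.measurableSet, ?_, ?_⟩, ?_⟩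
  · exact hK.closure_of_subset (interior_subset.trans Set.inter_subset_right)
  · exact ⟨_, isOpen_interior, mem_interior_iff_mem_nhds.2 (Filter.inter_mem hs hK1), le_rfl⟩
  · exact interior_subset.trans Set.inter_subset_left

theorem measure_symmDiff_smul_div_eq {G X : Type*} [Group G] [MulAction G X]
    [MeasurableSpace X] {μ : Measure X} (hmp : ∀ g : G, MeasurePreserving (g • ·) μ μ) {A : Set X}
    (hA : MeasurableSet A) (g h : G) :
    μ (A ∆ ((g / h) • A)) = μ (((g • ·) ⁻¹' A) ∆ ((h • ·) ⁻¹' A)) := by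
  have hsmul : MeasurableSet ((g / h) • A) := by
    rw [← Set.preimage_smul_inv]; exact (hmp _).measurable hA
  have hpre : ((g • ·) ⁻¹' A) ∆ ((h • ·) ⁻¹' A) = (g • ·) ⁻¹' (A ∆ ((g / h) • A)) := by
    rw [Set.preimage_symmDiff]
    congr 1
    ext x
    simp only [Set.mem_preimage, Set.mem_smul_set_iff_inv_smul_mem, smul_smul, div_eq_mul_inv,
      mul_inv_rev, inv_inv, inv_mul_cancel_right]
  rw [hpre, (hmp g).measure_preimage (hA.symmDiff hsmul).nullMeasurableSet]

theorem stmt1_general {G X : Type*} [Group G] [TopologicalSpace G] [IsTopologicalGroup G]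
    [LocallyCompactSpace G] [SecondCountableTopology G]
    [MeasurableSpace G] [BorelSpace G]
    [MulAction G X] [MeasurableSpace X]
    (lam : Measure G) [lam.IsHaarMeasure]
    (μ : Measure X) [IsProbabilityMeasure μ]
    (hmp : ∀ g : G, MeasurePreserving (fun x : X => g • x) μ μ)
    (hmeasact : ∀ A : Set X, MeasurableSet A →
      NullMeasurableSet ((fun p : G × X => p.1 • p.2) ⁻¹' A) (lam.prod μ)) :
    ∀ A : Set X, MeasurableSet A → ∀ ε : ℝ≥0∞, 0 < ε →
      ∃ U : Set G, IsIdNbhd G U ∧ ∀ g ∈ U, μ (A ∆ (g • A)) ≤ ε := by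
  intro A hA ε hε
  obtain ⟨E, -, hE, hEA⟩ := (hmeasact A hA).exists_measurable_subset_ae_eq
  have hsec : ∀ᵐ g ∂lam, Prod.mk g ⁻¹' E =ᵐ[μ] (g • ·) ⁻¹' A := Measure.ae_ae_of_ae_prod hEA
  obtain ⟨C, hC, hCE⟩ :=
    exists_seq_forall_measure_symmDiff_prodMk_lt μ hE (ENNReal.half_pos hε.ne')
  have hdist : ∀ n, ∀ᵐ g ∂lam,
      μ ((Prod.mk g ⁻¹' E) ∆ C n) = μ (((g • ·) ⁻¹' A) ∆ C n) := fun n =>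
    hsec.mono fun g hg => measure_congr (hg.symmDiff .rfl)
  let T n : Set G := {g | μ (((g • ·) ⁻¹' A) ∆ C n) < ε / 2}
  have hT n : NullMeasurableSet (T n) lam :=
    ((measurable_measure_symmDiff_prodMk_left hE (hC n)).aemeasurable.congr
      (hdist n)).nullMeasurable measurableSet_Iio
  have hcover : ∀ᵐ g ∂lam, ∃ n, g ∈ T n := by
    filter_upwards [ae_all_iff.2 hdist] with g hg
    exact (hCE g).imp fun n hn => show _ < _ from hg n ▸ hn
  obtain ⟨n, hn⟩ := exists_div_mem_nhds_one_of_ae_exists_mem lam hT hcover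
  obtain ⟨U, hU, hUT⟩ := exists_isIdNbhd_subset hn
  refine ⟨U, hU, fun c hc => ?_⟩
  obtain ⟨g, hg, h, hh, rfl⟩ := hUT hc
  calc μ (A ∆ ((g / h) • A)) = μ (((g • ·) ⁻¹' A) ∆ ((h • ·) ⁻¹' A)) :=
        measure_symmDiff_smul_div_eq hmp hA g h
    _ ≤ μ (((g • ·) ⁻¹' A) ∆ C n) + μ (C n ∆ ((h • ·) ⁻¹' A)) := measure_symmDiff_le _ _ _
    _ ≤ ε / 2 + ε / 2 := by rw [symmDiff_comm (C n)]; exact add_le_add hg.le hh.le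
    _ = ε := ENNReal.add_halves ε

/-- If a l.c.s.c. group `G` acts on a complete probability space `(X, μ)` by
measure-preserving transformations and the action map `(g, x) ↦ g • x` is measurable with
respect to the completion of the product of the Borel σ-algebra of `G` (with a left Haar
measure `lam`) and the σ-algebra of `X`, then the action is continuous: for every measurable
`A` and every `ε > 0` there is a neighborhood `U` of the identity with `μ (A Δ gA) ≤ ε` for
all `g ∈ U`. -/
theorem stmt1 {G X : Type*} [Group G] [TopologicalSpace G] [IsTopologicalGroup G]
    [LocallyCompactSpace G] [SecondCountableTopology G]
    [MeasurableSpace G] [BorelSpace G]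
    [MulAction G X] [MeasurableSpace X]
    (lam : Measure G) [lam.IsHaarMeasure]
    (μ : Measure X) [IsProbabilityMeasure μ] [μ.IsComplete]
    (hmp : ∀ g : G, MeasurePreserving (fun x : X => g • x) μ μ)
    (hmeasact : ∀ A : Set X, MeasurableSet A →
      NullMeasurableSet ((fun p : G × X => p.1 • p.2) ⁻¹' A) (lam.prod μ)) :
    ∀ A : Set X, MeasurableSet A → ∀ ε : ℝ≥0∞, 0 < ε →
      ∃ U : Set G, IsIdNbhd G U ∧ ∀ g ∈ U, μ (A ∆ (g • A)) ≤ ε :=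
  stmt1_general lam μ hmp hmeasact
end

section
/- Let G be a unimodular locally compact second countable group with Haar measure λ, let U be a neighborhood of the identity, let G act measurably, continuously and measure-preservingly on a complete probability space (X, μ), and let (Y, ν, Ψ) be an external U-cross section of covolume c. Then for every measurable subset T ⊆ G × Y the image Ψ(T) is measurable in X, and if moreover Ψ restricted to T is injective, then c·μ(Ψ(T)) = (λ × ν)(T). -/
/-!
Left translation by `g` carries `U × Y` onto `gU × Y`, preserving `λ × ν`, and by
equivariance `Ψ` turns it into the measure-preserving map `x ↦ g • x` on `X`; so `Ψ` scales
measure by `c` on every `gU × Y`. Countably many translates `gₙU` cover `G`, and cutting a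
measurable `T` along the disjointed cover `gₙU × Y` reduces both claims to countable
additivity, injectivity of `Ψ` on `T` keeping the image pieces disjoint.
-/

open MeasureTheory Filter Topology Pointwise
open scoped ENNReal symmDiff

/-- `(Y, ν, Ψ)` is an external `U`-cross section of covolume `c` for the action of `G` on
`(X, μ)`: `Ψ` is a measurable `G`-equivariant map such that `Ψ(U × Y)` is measurable,
`Ψ` restricted to `U × Y` is a bijective measure-preserving isomorphism between
`(U × Y, λ × ν)` and `(Ψ(U × Y), c • μ)`, and `Ψ(G × Y)` is conull in `X`. -/
structure IsExtCrossSection {G X Y : Type*} [Group G] [TopologicalSpace G]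
    [MeasurableSpace G] [MulAction G X] [MeasurableSpace X] [MeasurableSpace Y]
    (lam : MeasureTheory.Measure G) (μ : MeasureTheory.Measure X) (U : Set G)
    (ν : MeasureTheory.Measure Y) (Ψ : G × Y → X) (c : ℝ≥0∞) : Prop where
  measurable : Measurable Ψ
  equivariant : ∀ (g h : G) (y : Y), Ψ (g * h, y) = g • Ψ (h, y)
  image_meas : MeasurableSet (Ψ '' (U ×ˢ (Set.univ : Set Y)))
  injOn : Set.InjOn Ψ (U ×ˢ (Set.univ : Set Y))
  iso : ∀ S : Set (G × Y), S ⊆ U ×ˢ (Set.univ : Set Y) → MeasurableSet S →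
    MeasurableSet (Ψ '' S) ∧ c * μ (Ψ '' S) = (lam.prod ν) S
  conull : μ (Set.range Ψ)ᶜ = 0

open Set Function

def ScalesMeasureOn {α β : Type*} [MeasurableSpace α] [MeasurableSpace β] (Ψ : α → β)
    (ν : Measure α) (μ : Measure β) (c : ℝ≥0∞) (A : Set α) : Prop :=
  ∀ S ⊆ A, MeasurableSet S → MeasurableSet (Ψ '' S) ∧ c * μ (Ψ '' S) = ν S

namespace ScalesMeasureOn

variable {α β : Type*} [MeasurableSpace α] [MeasurableSpace β] {Ψ : α → β}
  {ν : Measure α} {μ : Measure β} {c : ℝ≥0∞} {W : ℕ → Set α} {T : Set α}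

theorem measurableSet_image_of_iUnion_eq_univ (hW : ∀ n, ScalesMeasureOn Ψ ν μ c (W n))
    (hWm : ∀ n, MeasurableSet (W n)) (hcov : ⋃ n, W n = univ) (hT : MeasurableSet T) :
    MeasurableSet (Ψ '' T) := by
  have hT_eq : T = ⋃ n, T ∩ W n := by rw [← inter_iUnion, hcov, inter_univ]
  rw [hT_eq, image_iUnion]
  exact .iUnion fun n => (hW n _ inter_subset_right (hT.inter (hWm n))).1

theorem measure_image_of_iUnion_eq_univ (hW : ∀ n, ScalesMeasureOn Ψ ν μ c (W n))
    (hWm : ∀ n, MeasurableSet (W n)) (hcov : ⋃ n, W n = univ) (hT : MeasurableSet T)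
    (hinj : InjOn Ψ T) : c * μ (Ψ '' T) = ν T := by
  set P : ℕ → Set α := fun n => T ∩ disjointed W n
  have hPm : ∀ n, MeasurableSet (P n) := fun n => hT.inter (.disjointed hWm n)
  have hPT : ⋃ n, P n = T := by rw [← inter_iUnion, iUnion_disjointed, hcov, inter_univ]
  have hPdisj : Pairwise (Disjoint on P) := fun i j hij =>
    (disjoint_disjointed W hij).mono inter_subset_right inter_subset_right
  have hP : ∀ n, MeasurableSet (Ψ '' P n) ∧ c * μ (Ψ '' P n) = ν (P n) := fun n =>
    hW n _ (inter_subset_right.trans (disjointed_subset W n)) (hPm n)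
  have hΨPdisj : Pairwise (Disjoint on fun n => Ψ '' P n) := fun i j hij =>
    (hPdisj hij).image hinj inter_subset_left inter_subset_left
  calc c * μ (Ψ '' T) = c * ∑' n, μ (Ψ '' P n) := by
        rw [← hPT, image_iUnion, measure_iUnion hΨPdisj fun n => (hP n).1]
    _ = ∑' n, ν (P n) := by rw [← ENNReal.tsum_mul_left]; exact tsum_congr fun n => (hP n).2
    _ = ν T := by rw [← measure_iUnion hPdisj hPm, hPT]

end ScalesMeasureOn

theorem IsIdNbhd.mem_nhds_one {G : Type*} [TopologicalSpace G] [One G] [MeasurableSpace G]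
    {U : Set G} (hU : IsIdNbhd G U) : U ∈ 𝓝 (1 : G) :=
  let ⟨_, _, _, hV, hV1, hVU⟩ := hU
  mem_of_superset (hV.mem_nhds hV1) hVU

theorem exists_seq_smul_eq_univ_of_mem_nhds_one {G : Type*} [Group G] [TopologicalSpace G]
    [ContinuousConstSMul G G] [SecondCountableTopology G] {U : Set G} (hU : U ∈ 𝓝 (1 : G)) :
    ∃ g : ℕ → G, ⋃ n, g n • U = univ := by
  have hnhds : ∀ g : G, g • U ∈ 𝓝 g := fun g => by
    simpa using (smul_mem_nhds_smul_iff g).2 hU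
  obtain ⟨s, hs, hcov⟩ := TopologicalSpace.countable_cover_nhds hnhds
  have hs_ne : s.Nonempty := by
    obtain ⟨g, hg, -⟩ := mem_iUnion₂.1 (hcov.symm ▸ mem_univ (1 : G))
    exact ⟨g, hg⟩
  obtain ⟨g, rfl⟩ := hs.exists_eq_range hs_ne
  exact ⟨g, by rwa [biUnion_range] at hcov⟩

namespace IsExtCrossSection

variable {G X Y : Type*} [Group G] [TopologicalSpace G] [MeasurableSpace G] [MeasurableMul G]
  [MulAction G X] [MeasurableSpace X] [MeasurableSpace Y] [MeasurableConstSMul G X]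
  {lam : Measure G} {μ : Measure X} {U : Set G} {ν : Measure Y} {Ψ : G × Y → X} {c : ℝ≥0∞}

theorem scalesMeasureOn_smul_prod [lam.IsMulLeftInvariant] [SFinite lam] [SFinite ν]
    [SMulInvariantMeasure G X μ] (hcross : IsExtCrossSection lam μ U ν Ψ c) (g : G) :
    ScalesMeasureOn Ψ (lam.prod ν) μ c ((g • U) ×ˢ univ) := by
  intro S hS hSm
  set m : G × Y → G × Y := Prod.map (g * ·) id
  have hm : MeasurePreserving m (lam.prod ν) (lam.prod ν) :=
    (measurePreserving_mul_left lam g).prod (.id ν)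
  have hS'U : m ⁻¹' S ⊆ U ×ˢ univ := fun p hp =>
    ⟨(smul_mem_smul_set_iff (a := g)).1 (hS hp).1, mem_univ _⟩
  have hΨS : Ψ '' S = g • Ψ '' (m ⁻¹' S) := by
    have hm_surj : Surjective m := fun q => ⟨(g⁻¹ * q.1, q.2), by simp [m]⟩
    rw [← image_smul, image_image, ← image_preimage_eq S hm_surj, image_image,
      preimage_image_preimage]
    exact image_congr fun p _ => hcross.equivariant g p.1 p.2
  obtain ⟨hmeas, hmeasure⟩ := hcross.iso _ hS'U (hm.measurable hSm)
  rw [hΨS, measure_smul, hmeasure, hm.measure_preimage hSm.nullMeasurableSet]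
  exact ⟨hmeas.const_smul g, rfl⟩

end IsExtCrossSection

theorem stmt10_general {G X Y : Type*} [Group G] [TopologicalSpace G] [IsTopologicalGroup G]
    [LocallyCompactSpace G] [SecondCountableTopology G]
    [MeasurableSpace G] [BorelSpace G]
    [MulAction G X] [MeasurableSpace X] [MeasurableSpace Y]
    (lam : Measure G) [lam.IsHaarMeasure]
    (U : Set G) (hU : IsIdNbhd G U)
    (μ : Measure X)
    (hmp : ∀ g : G, MeasurePreserving (fun x : X => g • x) μ μ)
    (ν : Measure Y) [IsProbabilityMeasure ν]
    (Ψ : G × Y → X) (c : ℝ≥0∞)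
    (hcross : IsExtCrossSection lam μ U ν Ψ c) :
    ∀ T : Set (G × Y), MeasurableSet T →
      MeasurableSet (Ψ '' T) ∧
      (Set.InjOn Ψ T → c * μ (Ψ '' T) = (lam.prod ν) T) := by
  have : MeasurableConstSMul G X := ⟨fun g => (hmp g).measurable⟩
  have : SMulInvariantMeasure G X μ :=
    ⟨fun g _ hA => (hmp g).measure_preimage hA.nullMeasurableSet⟩
  obtain ⟨g, hg⟩ := exists_seq_smul_eq_univ_of_mem_nhds_one hU.mem_nhds_one
  have hW n := hcross.scalesMeasureOn_smul_prod (g n)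
  have hWm n : MeasurableSet ((g n • U) ×ˢ (univ : Set Y)) := (hU.1.const_smul _).prod .univ
  have hcov : ⋃ n, (g n • U) ×ˢ (univ : Set Y) = univ := by
    rw [← iUnion_prod_const, hg, univ_prod_univ]
  exact fun T hT => ⟨ScalesMeasureOn.measurableSet_image_of_iUnion_eq_univ hW hWm hcov hT,
    ScalesMeasureOn.measure_image_of_iUnion_eq_univ hW hWm hcov hT⟩

/-- For a measurable, continuous, measure-preserving action of a unimodular l.c.s.c. group
`G` on a complete probability space `(X, μ)` with external `U`-cross section `(Y, ν, Ψ)` of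
covolume `c`: for every measurable `T ⊆ G × Y` the image `Ψ(T)` is measurable, and if `Ψ` is
injective on `T` then `c • μ (Ψ(T)) = (λ × ν)(T)`. -/
theorem stmt10 {G X Y : Type*} [Group G] [TopologicalSpace G] [IsTopologicalGroup G]
    [LocallyCompactSpace G] [SecondCountableTopology G]
    [MeasurableSpace G] [BorelSpace G]
    [MulAction G X] [MeasurableSpace X] [MeasurableSpace Y]
    (lam : Measure G) [lam.IsHaarMeasure] [lam.IsMulRightInvariant]
    (U : Set G) (hU : IsIdNbhd G U)
    (μ : Measure X) [IsProbabilityMeasure μ] [μ.IsComplete]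
    (hmp : ∀ g : G, MeasurePreserving (fun x : X => g • x) μ μ)
    (hcont : ∀ A : Set X, MeasurableSet A → ∀ ε : ℝ≥0∞, 0 < ε →
      ∃ V : Set G, IsIdNbhd G V ∧ ∀ g ∈ V, μ (A ∆ (g • A)) ≤ ε)
    (hmeasact : ∀ A : Set X, MeasurableSet A →
      NullMeasurableSet ((fun p : G × X => p.1 • p.2) ⁻¹' A) (lam.prod μ))
    (ν : Measure Y) [IsProbabilityMeasure ν]
    (Ψ : G × Y → X) (c : ℝ≥0∞) (hc0 : 0 < c) (hctop : c < ⊤)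
    (hcross : IsExtCrossSection lam μ U ν Ψ c) :
    ∀ T : Set (G × Y), MeasurableSet T →
      MeasurableSet (Ψ '' T) ∧
      (Set.InjOn Ψ T → c * μ (Ψ '' T) = (lam.prod ν) T) :=
  stmt10_general lam U hU μ hmp ν Ψ c hcross
end

section
/- Let G be a unimodular locally compact second countable group with Haar measure λ, let U be a neighborhood of the identity, let G act measurably, continuously and measure-preservingly on a complete probability space (X, μ), and let (Y, ν, Ψ) be an external U-cross section of covolume c. Then there exists a measurable subset T ⊆ G × Y with U × Y ⊆ T such that Ψ restricted to T is injective, Ψ(T) is conull in X, and Ψ carries the measure (λ × ν) restricted to T to the measure c·μ; that is, Ψ|_T is a measure-preserving isomorphism between (T, (λ × ν)|_T) and (X, c·μ) up to null sets. -/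
/-! Countably many translates `gₙ • U` (with `g₀ = 1`) cover `G`, because `U` is a neighbourhood
of `1` and `G` is second countable. By equivariance and the invariance of `λ` and `μ`, `Ψ` is a
measure isomorphism on every slab `(gₙ • U) × Y`, not just on `U × Y`. Cutting each slab down to
the points whose image is not already covered by an earlier slab (pulling back the `disjointed`
sequence of images) yields pieces with pairwise disjoint images, so `Ψ` stays injective and
measure-preserving on their union `T`, and `Ψ '' T = Ψ '' (G × Y)` is conull. -/

open MeasureTheory Filter Topology Pointwise
open scoped ENNReal symmDiff

open Set Function

def IsMeasureEmbeddingOn {α β : Type*} [MeasurableSpace α] [MeasurableSpace β] (Ψ : α → β)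
    (m : Measure α) (m' : Measure β) (A : Set α) : Prop :=
  InjOn Ψ A ∧ ∀ S ⊆ A, MeasurableSet S → MeasurableSet (Ψ '' S) ∧ m' (Ψ '' S) = m S

namespace IsMeasureEmbeddingOn

variable {α β : Type*} [MeasurableSpace α] [MeasurableSpace β] {Ψ : α → β} {m : Measure α}
  {m' : Measure β} {A B : Set α}

theorem mono (h : IsMeasureEmbeddingOn Ψ m m' A) (hBA : B ⊆ A) : IsMeasureEmbeddingOn Ψ m m' B :=
  ⟨h.1.mono hBA, fun S hS => h.2 S (hS.trans hBA)⟩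

theorem iUnion {ι : Type*} [Countable ι] {A : ι → Set α}
    (h : ∀ i, IsMeasureEmbeddingOn Ψ m m' (A i)) (hA : ∀ i, MeasurableSet (A i))
    (hdisj : Pairwise (Disjoint on fun i => Ψ '' A i)) :
    IsMeasureEmbeddingOn Ψ m m' (⋃ i, A i) := by
  refine ⟨fun p hp q hq hpq => ?_, fun S hS hSm => ?_⟩
  · obtain ⟨i, hpi⟩ := mem_iUnion.mp hp
    obtain ⟨j, hqj⟩ := mem_iUnion.mp hq
    obtain rfl : i = j := by
      by_contra hij
      exact disjoint_left.mp (hdisj hij) (mem_image_of_mem Ψ hpi) (hpq ▸ mem_image_of_mem Ψ hqj)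
    exact (h i).1 hpi hqj hpq
  have hSA : S = ⋃ i, S ∩ A i := by rw [← inter_iUnion, inter_eq_left.mpr hS]
  have hpiece i := (h i).2 (S ∩ A i) inter_subset_right (hSm.inter (hA i))
  have himage : Pairwise (Disjoint on fun i => Ψ '' (S ∩ A i)) := fun i j hij =>
    (hdisj hij).mono (image_mono inter_subset_right) (image_mono inter_subset_right)
  have hpieces : Pairwise (Disjoint on fun i => S ∩ A i) := fun i j hij => (himage hij).of_image
  rw [hSA, image_iUnion, measure_iUnion himage fun i => (hpiece i).1,
    measure_iUnion hpieces fun i => hSm.inter (hA i)]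
  exact ⟨.iUnion fun i => (hpiece i).1, tsum_congr fun i => (hpiece i).2⟩

theorem preimage_of_semiconj (h : IsMeasureEmbeddingOn Ψ m m' A) {e : α ≃ᵐ α}
    (he : MeasurePreserving e m m) {e' : β → β} (he'_inj : Injective e')
    (he' : MeasurePreserving e' m' m') (hΨ : Semiconj Ψ e e') :
    IsMeasureEmbeddingOn Ψ m m' (e ⁻¹' A) := by
  refine ⟨fun a ha b hb hab => e.injective (h.1 ha hb (by rw [hΨ, hΨ, hab])),
    fun S hS hSm => ?_⟩
  obtain ⟨hm, hmeasure⟩ := h.2 (e '' S) (image_subset_iff.mpr hS) (e.measurableSet_image.mpr hSm)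
  have hSimage : Ψ '' S = e' ⁻¹' (Ψ '' (e '' S)) := by
    rw [hΨ.set_image S, preimage_image_eq _ he'_inj]
  rw [hSimage, he'.measure_preimage hm.nullMeasurableSet, hmeasure,
    ← he.measure_preimage_equiv, preimage_image_eq _ e.injective]
  exact ⟨he'.measurable hm, rfl⟩

theorem exists_image_eq_iUnion (hΨ : Measurable Ψ) {A : ℕ → Set α}
    (h : ∀ n, IsMeasureEmbeddingOn Ψ m m' (A n)) (hA : ∀ n, MeasurableSet (A n)) :
    ∃ T, MeasurableSet T ∧ A 0 ⊆ T ∧ Ψ '' T = ⋃ n, Ψ '' A n ∧ IsMeasureEmbeddingOn Ψ m m' T := by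
  set D := disjointed fun n => Ψ '' A n
  have hD n : MeasurableSet (D n) :=
    .disjointed (fun k => ((h k).2 (A k) subset_rfl (hA k)).1) n
  have hDimage n : Ψ '' (A n ∩ Ψ ⁻¹' D n) = D n := by
    rw [image_inter_preimage]
    exact inter_eq_right.mpr (disjointed_subset _ n)
  refine ⟨⋃ n, A n ∩ Ψ ⁻¹' D n, .iUnion fun n => (hA n).inter (hΨ (hD n)), ?_, ?_, ?_⟩
  · refine subset_iUnion_of_subset 0 (subset_inter subset_rfl ?_)
    rw [show D 0 = Ψ '' A 0 from disjointed_zero _]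
    exact subset_preimage_image Ψ (A 0)
  · rw [image_iUnion]
    simp only [hDimage, iUnion_disjointed, D]
  · refine iUnion (fun n => (h n).mono inter_subset_left)
      (fun n => (hA n).inter (hΨ (hD n))) ?_
    simpa only [hDimage] using disjoint_disjointed _

end IsMeasureEmbeddingOn

theorem exists_seq_smul_cover_of_mem_nhds_one {G : Type*} [Group G] [TopologicalSpace G]
    [IsTopologicalGroup G] [SecondCountableTopology G] {U : Set G} (hU : U ∈ 𝓝 (1 : G)) :
    ∃ g : ℕ → G, g 0 = 1 ∧ ⋃ n, g n • U = univ := by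
  obtain ⟨s, hs, hcover⟩ :=
    TopologicalSpace.countable_cover_nhds fun x : G => smul_mem_nhds_self.mpr hU
  have hne : s.Nonempty := by
    by_contra! hs0
    rw [hs0, biUnion_empty] at hcover
    exact empty_ne_univ hcover
  obtain ⟨f, rfl⟩ := hs.exists_eq_range hne
  refine ⟨fun n => Nat.casesOn n 1 f, rfl, eq_univ_of_forall fun x => ?_⟩
  obtain ⟨_, ⟨k, rfl⟩, hx⟩ := mem_iUnion₂.mp (hcover ▸ mem_univ x)
  exact mem_iUnion.mpr ⟨k + 1, hx⟩

namespace IsExtCrossSection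

variable {G X Y : Type*} [Group G] [TopologicalSpace G] [MeasurableSpace G] [MulAction G X]
  [MeasurableSpace X] [MeasurableSpace Y]
  {lam : Measure G} {μ : Measure X} {U : Set G} {ν : Measure Y} {Ψ : G × Y → X} {c : ℝ≥0∞}

theorem isMeasureEmbeddingOn (h : IsExtCrossSection lam μ U ν Ψ c) :
    IsMeasureEmbeddingOn Ψ (lam.prod ν) (c • μ) (U ×ˢ univ) :=
  ⟨h.injOn, fun S hS hSm => by simpa only [Measure.smul_apply, smul_eq_mul] using h.iso S hS hSm⟩

theorem isMeasureEmbeddingOn_smul [MeasurableMul G] [lam.IsMulLeftInvariant] [SFinite lam]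
    [SFinite ν]
    (h : IsExtCrossSection lam μ U ν Ψ c) (hmp : ∀ g : G, MeasurePreserving (g • ·) μ μ)
    (g : G) : IsMeasureEmbeddingOn Ψ (lam.prod ν) (c • μ) ((g • U) ×ˢ univ) := by
  let e : G × Y ≃ᵐ G × Y := (MeasurableEquiv.mulLeft g⁻¹).prodCongr (MeasurableEquiv.refl Y)
  have he : MeasurePreserving e (lam.prod ν) (lam.prod ν) :=
    (measurePreserving_mul_left lam g⁻¹).prod (MeasurePreserving.id ν)
  have hpre : e ⁻¹' (U ×ˢ univ) = (g • U) ×ˢ univ := by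
    ext ⟨a, y⟩
    simp only [mem_preimage, mem_prod, mem_univ, and_true, mem_smul_set_iff_inv_smul_mem,
      smul_eq_mul, e]
    rfl
  rw [← hpre]
  exact h.isMeasureEmbeddingOn.preimage_of_semiconj he (MulAction.injective g⁻¹)
    ((hmp g⁻¹).smul_measure c) fun p => h.equivariant g⁻¹ p.1 p.2

end IsExtCrossSection

theorem stmt11_general {G X Y : Type*} [Group G] [TopologicalSpace G] [IsTopologicalGroup G]
    [LocallyCompactSpace G] [SecondCountableTopology G]
    [MeasurableSpace G] [BorelSpace G]
    [MulAction G X] [MeasurableSpace X] [MeasurableSpace Y]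
    (lam : Measure G) [lam.IsHaarMeasure]
    (U : Set G) (hU : IsIdNbhd G U)
    (μ : Measure X)
    (hmp : ∀ g : G, MeasurePreserving (fun x : X => g • x) μ μ)
    (ν : Measure Y) [IsProbabilityMeasure ν]
    (Ψ : G × Y → X) (c : ℝ≥0∞)
    (hcross : IsExtCrossSection lam μ U ν Ψ c) :
    ∃ T : Set (G × Y), MeasurableSet T ∧ U ×ˢ (Set.univ : Set Y) ⊆ T ∧
      Set.InjOn Ψ T ∧ μ ((Ψ '' T)ᶜ) = 0 ∧
      ∀ S : Set (G × Y), S ⊆ T → MeasurableSet S →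
        MeasurableSet (Ψ '' S) ∧ c * μ (Ψ '' S) = (lam.prod ν) S := by
  obtain ⟨hUm, -, V, hVo, hV1, hVU⟩ := hU
  obtain ⟨g, hg0, hcover⟩ :=
    exists_seq_smul_cover_of_mem_nhds_one (mem_of_superset (hVo.mem_nhds hV1) hVU)
  obtain ⟨T, hTm, hUT, himage, hT⟩ := IsMeasureEmbeddingOn.exists_image_eq_iUnion
    hcross.measurable (fun n => hcross.isMeasureEmbeddingOn_smul hmp (g n))
    fun n => (hUm.const_smul (g n)).prod .univ
  have hrange : Ψ '' T = range Ψ := by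
    rw [himage, ← image_iUnion, ← iUnion_prod_const, hcover, univ_prod_univ, image_univ]
  refine ⟨T, hTm, by simpa [hg0] using hUT, hT.1, hrange ▸ hcross.conull, fun S hS hSm => ?_⟩
  simpa only [Measure.smul_apply, smul_eq_mul] using hT.2 S hS hSm

/-- For an external `U`-cross section `(Y, ν, Ψ)` of covolume `c`, there is a measurable
`T ⊆ G × Y` containing `U × Y` on which `Ψ` is injective, whose image is conull, and on which
`Ψ` carries `(λ × ν)|_T` to `c • μ`: a measure-preserving isomorphism up to null sets. -/
theorem stmt11 {G X Y : Type*} [Group G] [TopologicalSpace G] [IsTopologicalGroup G]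
    [LocallyCompactSpace G] [SecondCountableTopology G]
    [MeasurableSpace G] [BorelSpace G]
    [MulAction G X] [MeasurableSpace X] [MeasurableSpace Y]
    (lam : Measure G) [lam.IsHaarMeasure] [lam.IsMulRightInvariant]
    (U : Set G) (hU : IsIdNbhd G U)
    (μ : Measure X) [IsProbabilityMeasure μ] [μ.IsComplete]
    (hmp : ∀ g : G, MeasurePreserving (fun x : X => g • x) μ μ)
    (hcont : ∀ A : Set X, MeasurableSet A → ∀ ε : ℝ≥0∞, 0 < ε →
      ∃ V : Set G, IsIdNbhd G V ∧ ∀ g ∈ V, μ (A ∆ (g • A)) ≤ ε)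
    (hmeasact : ∀ A : Set X, MeasurableSet A →
      NullMeasurableSet ((fun p : G × X => p.1 • p.2) ⁻¹' A) (lam.prod μ))
    (ν : Measure Y) [IsProbabilityMeasure ν]
    (Ψ : G × Y → X) (c : ℝ≥0∞) (hc0 : 0 < c) (hctop : c < ⊤)
    (hcross : IsExtCrossSection lam μ U ν Ψ c) :
    ∃ T : Set (G × Y), MeasurableSet T ∧ U ×ˢ (Set.univ : Set Y) ⊆ T ∧
      Set.InjOn Ψ T ∧ μ ((Ψ '' T)ᶜ) = 0 ∧
      ∀ S : Set (G × Y), S ⊆ T → MeasurableSet S →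
        MeasurableSet (Ψ '' S) ∧ c * μ (Ψ '' S) = (lam.prod ν) S :=
  stmt11_general lam U hU μ hmp ν Ψ c hcross
end

section
/- Let G be a unimodular locally compact second countable group with Haar measure λ, let U be a neighborhood of the identity, let G act measurably, continuously and measure-preservingly on a complete probability space (X, μ), and let (Y, ν, Ψ) be an external U-cross section. Then there exists a countable family of measurable, measure-preserving partial bijections φ_j : D_j → Y of (Y, ν), defined on measurable subsets D_j ⊆ Y, such that for every j and every y ∈ D_j there exists g ∈ G with g·Ψ(id_G, y) = Ψ(id_G, φ_j(y)), and such that the smallest equivalence relation on Y containing the graphs of all the φ_j coincides, after restriction to a suitable conull subset of Y, with the relation R_Y = {(y, y′) ∈ Y × Y : ∃ g ∈ G with g·Ψ(id_G, y) = Ψ(id_G, y′)}. -/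
/-!
Write `θ y = Ψ (1, y)`, so that `Ψ (g, y) = g • θ y`; injectivity of `Ψ` on `U × Y` says that
`g • θ y = θ y'` with `g ∈ U` forces `g = 1` and `y = y'`. Cover `G` by countably many open sets
`W n` with `W n * (W n)⁻¹ ⊆ U` and `(W n)⁻¹ * W n ⊆ U`. Then for each `y` there is at most one `y'`
with `g • θ y = θ y'` for some `g ∈ W n`, and the resulting partial map `φ n : y ↦ y'` is
injective; every pair in the same orbit is related by some `φ n`.

`Ψ` maps measurable sets to measurable sets, with `c * μ (Ψ '' T) = (λ × ν) T` whenever `Ψ` is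
injective on `T`, since a measurable subset of `G × Y` splits into countably many pieces lying in
translates `e k • U × Y`. With `g y` the group element carrying `θ y` to `θ (φ n y)`, `Ψ` maps the
thickened graph `{(h, y) | y ∈ S, h * (g y)⁻¹ ∈ U}`, of measure `λ U * ν S`, bijectively onto
`Ψ '' (U × φ n '' S)`, of measure `λ U * ν (φ n '' S)`; so `φ n` preserves `ν`.
-/

open MeasureTheory Filter Topology Pointwise
open scoped ENNReal symmDiff

open Set Function

section TopologicalGroup

variable {G : Type*} [Group G] [TopologicalSpace G] [IsTopologicalGroup G] {U : Set G}

theorem exists_seq_iUnion_smul_eq_univ [TopologicalSpace.SeparableSpace G] (hU : U ∈ 𝓝 (1 : G)) :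
    ∃ e : ℕ → G, ⋃ k, e k • U = univ := by
  obtain ⟨d, hd⟩ := TopologicalSpace.exists_dense_seq G
  refine ⟨d, eq_univ_of_forall fun g => mem_iUnion.2 ?_⟩
  have hopen : IsOpen {h : G | h⁻¹ * g ∈ interior U} :=
    isOpen_interior.preimage (continuous_inv.mul continuous_const)
  obtain ⟨k, hk⟩ := hd.exists_mem_open hopen ⟨g, by simpa [mem_interior_iff_mem_nhds] using hU⟩
  exact ⟨k, mem_smul_set_iff_inv_smul_mem.2 (interior_subset hk)⟩

theorem exists_mem_nhds_mul_inv_mem (hU : U ∈ 𝓝 (1 : G)) (g : G) :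
    ∃ O ∈ 𝓝 g, ∀ a ∈ O, ∀ b ∈ O, a * b⁻¹ ∈ U ∧ a⁻¹ * b ∈ U := by
  have hcont : Continuous fun p : G × G => (p.1 * p.2⁻¹, p.1⁻¹ * p.2) := by fun_prop
  have hmem : (fun p : G × G => (p.1 * p.2⁻¹, p.1⁻¹ * p.2)) ⁻¹' U ×ˢ U ∈ 𝓝 g ×ˢ 𝓝 g := by
    rw [← nhds_prod_eq]
    refine hcont.continuousAt.preimage_mem_nhds ?_
    simpa using prod_mem_nhds hU hU
  obtain ⟨O, hO, hOO⟩ := Filter.mem_prod_self_iff.1 hmem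
  exact ⟨O, hO, fun a ha b hb => hOO (mk_mem_prod ha hb)⟩

theorem exists_isOpen_seq_cover_mul_inv_mem [SecondCountableTopology G]
    (hU : U ∈ 𝓝 (1 : G)) :
    ∃ W : ℕ → Set G, (∀ n, IsOpen (W n)) ∧ ⋃ n, W n = univ ∧
      ∀ n, ∀ a ∈ W n, ∀ b ∈ W n, a * b⁻¹ ∈ U ∧ a⁻¹ * b ∈ U := by
  choose O hO hOU using exists_mem_nhds_mul_inv_mem hU
  obtain ⟨t, htc, ht⟩ := countable_cover_nhds_interior hO
  have htne : t.Nonempty := by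
    obtain ⟨x, hx, -⟩ := mem_iUnion₂.1 (ht.symm ▸ mem_univ (1 : G))
    exact ⟨x, hx⟩
  obtain ⟨x, rfl⟩ := htc.exists_eq_range htne
  refine ⟨fun n => interior (O (x n)), fun n => isOpen_interior, by simpa using ht,
    fun n a ha b hb => hOU _ a (interior_subset ha) b (interior_subset hb)⟩

end TopologicalGroup

theorem MeasurableSet.exists_disjoint_partition_subordinate {α : Type*} [MeasurableSpace α]
    {A : ℕ → Set α} (hA : ∀ k, MeasurableSet (A k)) (hcov : ⋃ k, A k = univ) {T : Set α}
    (hT : MeasurableSet T) :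
    ∃ p : ℕ → Set α, (∀ k, MeasurableSet (p k)) ∧ Pairwise (Disjoint on p) ∧
      (∀ k, p k ⊆ A k) ∧ ⋃ k, p k = T :=
  ⟨disjointed fun k => T ∩ A k, .disjointed fun k => hT.inter (hA k), disjoint_disjointed _,
    fun k => (disjointed_subset _ k).trans inter_subset_right,
    by rw [iUnion_disjointed, ← inter_iUnion, hcov, inter_univ]⟩

theorem exists_partition_subordinate_smul {G Y : Type*} [Group G] [MeasurableSpace G]
    [MeasurableMul G] [MeasurableSpace Y] {U : Set G} {e : ℕ → G} {T : Set (G × Y)}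
    (hUm : MeasurableSet U) (he : ⋃ k, e k • U = univ) (hT : MeasurableSet T) :
    ∃ p : ℕ → Set (G × Y), (∀ k, MeasurableSet (p k)) ∧ Pairwise (Disjoint on p) ∧
      (∀ k, p k ⊆ (e k • U) ×ˢ univ) ∧ ⋃ k, p k = T :=
  hT.exists_disjoint_partition_subordinate (fun k => (hUm.const_smul _).prod .univ)
    (by rw [← iUnion_prod_const, he, univ_prod_univ])

section ThickenedGraph

variable {G Y : Type*} [Group G] [MeasurableSpace G] [MeasurableMul₂ G] [MeasurableInv G]
  [MeasurableSpace Y] {U : Set G} {g : Y → G}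

theorem measurableSet_setOf_mul_inv_mem {S : Set Y} (hU : MeasurableSet U) (hS : MeasurableSet S)
    (hg : Measurable g) : MeasurableSet {p : G × Y | p.2 ∈ S ∧ p.1 * (g p.2)⁻¹ ∈ U} :=
  (measurable_snd hS).inter ((measurable_fst.mul (hg.comp measurable_snd).inv) hU)

theorem measure_prod_setOf_mul_inv_mem (lam : Measure G) [lam.IsMulRightInvariant] [SFinite lam]
    (ν : Measure Y) [SFinite ν] {S : Set Y} (hU : MeasurableSet U) (hS : MeasurableSet S)
    (hg : Measurable g) :
    lam.prod ν {p : G × Y | p.2 ∈ S ∧ p.1 * (g p.2)⁻¹ ∈ U} = lam U * ν S := by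
  rw [Measure.prod_apply_symm (measurableSet_setOf_mul_inv_mem hU hS hg), ← setLIntegral_const,
    ← lintegral_indicator hS]
  refine lintegral_congr fun y => ?_
  by_cases hy : y ∈ S
  · have : (fun h => (h, y)) ⁻¹' {p : G × Y | p.2 ∈ S ∧ p.1 * (g p.2)⁻¹ ∈ U} =
        (fun h => h * (g y)⁻¹) ⁻¹' U := by
      ext h; simp [hy]
    rw [this, measure_preimage_mul_right, indicator_of_mem hy]
  · simp [hy]

end ThickenedGraph

section CrossStep

variable {G X Y : Type*} [Group G] [MulAction G X]

def crossDomain (Ψ : G × Y → X) (W : Set G) : Set Y :=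
  {y | ∃ p : G × Y, p.1 ∈ W ∧ p.1 • Ψ (1, y) = Ψ (1, p.2)}

-- The second component is the partial map `φ_W` of the cross equivalence relation; off
-- `crossDomain Ψ W` the value `(1, y)` is a junk value.
open Classical in
noncomputable def crossStep (Ψ : G × Y → X) (W : Set G) (y : Y) : G × Y :=
  if h : y ∈ crossDomain Ψ W then h.choose else (1, y)

variable {Ψ : G × Y → X} {W : Set G} {y : Y}

theorem crossStep_spec (hy : y ∈ crossDomain Ψ W) :
    (crossStep Ψ W y).1 ∈ W ∧ (crossStep Ψ W y).1 • Ψ (1, y) = Ψ (1, (crossStep Ψ W y).2) := by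
  rw [crossStep, dif_pos hy]
  exact hy.choose_spec

theorem crossStep_of_notMem (hy : y ∉ crossDomain Ψ W) : crossStep Ψ W y = (1, y) :=
  dif_neg hy

theorem equivalence_exists_smul_eq (f : Y → X) : Equivalence fun y y' => ∃ g : G, g • f y = f y' :=
  ⟨fun _ => ⟨1, one_smul _ _⟩, fun ⟨g, h⟩ => ⟨g⁻¹, by rw [← h, inv_smul_smul]⟩,
    fun ⟨g, h⟩ ⟨g', h'⟩ => ⟨g' * g, by rw [mul_smul, h, h']⟩⟩

end CrossStep

namespace IsExtCrossSection

variable {G X Y : Type*} [Group G] [TopologicalSpace G] [MeasurableSpace G] [MulAction G X]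
  [MeasurableSpace X] [MeasurableSpace Y] {lam : Measure G} {μ : Measure X} {U : Set G}
  {ν : Measure Y} {Ψ : G × Y → X} {c : ℝ≥0∞} {W : Set G}

theorem apply_eq_smul (hΨ : IsExtCrossSection lam μ U ν Ψ c) (g : G) (y : Y) :
    Ψ (g, y) = g • Ψ (1, y) := by
  simpa using hΨ.equivariant g 1 y

theorem measurable_apply_one (hΨ : IsExtCrossSection lam μ U ν Ψ c) :
    Measurable fun y => Ψ (1, y) :=
  hΨ.measurable.comp measurable_prodMk_left

theorem eq_one_of_smul_eq (hΨ : IsExtCrossSection lam μ U ν Ψ c) (h1U : (1 : G) ∈ U) {g : G}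
    {y y' : Y} (hg : g ∈ U) (h : g • Ψ (1, y) = Ψ (1, y')) : g = 1 ∧ y = y' :=
  Prod.mk.inj <| hΨ.injOn (mk_mem_prod hg trivial) (mk_mem_prod h1U trivial) <| by
    rw [hΨ.apply_eq_smul, h]

theorem crossStep_eq (hΨ : IsExtCrossSection lam μ U ν Ψ c) (h1U : (1 : G) ∈ U)
    (hW : ∀ a ∈ W, ∀ b ∈ W, a * b⁻¹ ∈ U) {g : G} {y y' : Y} (hg : g ∈ W)
    (h : g • Ψ (1, y) = Ψ (1, y')) : crossStep Ψ W y = (g, y') := by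
  obtain ⟨ha, hay⟩ := crossStep_spec (Ψ := Ψ) (W := W) ⟨(g, y'), hg, h⟩
  have : (g * (crossStep Ψ W y).1⁻¹) • Ψ (1, (crossStep Ψ W y).2) = Ψ (1, y') := by
    rw [← hay, smul_smul, inv_mul_cancel_right, h]
  obtain ⟨hga, hy⟩ := hΨ.eq_one_of_smul_eq h1U (hW g hg _ ha) this
  exact Prod.ext (mul_inv_eq_one.1 hga).symm hy

theorem injOn_crossStep_snd (hΨ : IsExtCrossSection lam μ U ν Ψ c) (h1U : (1 : G) ∈ U)
    (hW : ∀ a ∈ W, ∀ b ∈ W, a⁻¹ * b ∈ U) :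
    InjOn (fun y => (crossStep Ψ W y).2) (crossDomain Ψ W) := by
  intro y₁ hy₁ y₂ hy₂ heq
  obtain ⟨ha₁, h₁⟩ := crossStep_spec hy₁
  obtain ⟨ha₂, h₂⟩ := crossStep_spec hy₂
  refine (hΨ.eq_one_of_smul_eq h1U (hW _ ha₂ _ ha₁) ?_).2
  rw [mul_smul, h₁, show (crossStep Ψ W y₁).2 = (crossStep Ψ W y₂).2 from heq, ← h₂,
    inv_smul_smul]

theorem crossDomain_eq_preimage (hΨ : IsExtCrossSection lam μ U ν Ψ c) :
    crossDomain Ψ W = (fun y => Ψ (1, y)) ⁻¹' (Ψ '' (W⁻¹ ×ˢ univ)) := by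
  ext y
  constructor
  · rintro ⟨⟨g, y'⟩, hg, h⟩
    exact ⟨(g⁻¹, y'), ⟨by simpa using hg, trivial⟩, by rw [hΨ.apply_eq_smul, ← h, inv_smul_smul]⟩
  · rintro ⟨⟨a, y'⟩, ⟨ha, -⟩, h : Ψ (a, y') = Ψ (1, y)⟩
    exact ⟨(a⁻¹, y'), ha, by rw [← h, hΨ.apply_eq_smul a, inv_smul_smul]⟩

theorem image_crossStep_snd (hΨ : IsExtCrossSection lam μ U ν Ψ c) (h1U : (1 : G) ∈ U)
    (hW : ∀ a ∈ W, ∀ b ∈ W, a * b⁻¹ ∈ U) {S : Set Y} (hS : S ⊆ crossDomain Ψ W) :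
    (fun y => (crossStep Ψ W y).2) '' S = (fun y => Ψ (1, y)) ⁻¹' (Ψ '' (W ×ˢ S)) := by
  ext z
  constructor
  · rintro ⟨y, hy, rfl⟩
    obtain ⟨ha, h⟩ := crossStep_spec (hS hy)
    exact ⟨(_, y), ⟨ha, hy⟩, by rw [hΨ.apply_eq_smul, h]⟩
  · rintro ⟨⟨g, y⟩, ⟨hg, hy⟩, h⟩
    rw [hΨ.apply_eq_smul] at h
    exact ⟨y, hy, congrArg Prod.snd (hΨ.crossStep_eq h1U hW hg h)⟩

theorem exists_smul_eq_iff_eqvGen (hΨ : IsExtCrossSection lam μ U ν Ψ c) (h1U : (1 : G) ∈ U)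
    {W : ℕ → Set G} (hWcov : ⋃ n, W n = univ) (hW : ∀ n, ∀ a ∈ W n, ∀ b ∈ W n, a * b⁻¹ ∈ U)
    (y y' : Y) :
    (∃ g : G, g • Ψ (1, y) = Ψ (1, y')) ↔
      Relation.EqvGen (fun a b => ∃ n, a ∈ crossDomain Ψ (W n) ∧ (crossStep Ψ (W n) a).2 = b)
        y y' := by
  refine ⟨fun ⟨g, hg⟩ => ?_, fun h =>
    (equivalence_exists_smul_eq fun y => Ψ (1, y)).eqvGen_iff.1 <|
      h.mono fun a b ⟨n, ha, hab⟩ => ⟨_, hab ▸ (crossStep_spec ha).2⟩⟩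
  obtain ⟨n, hn⟩ := mem_iUnion.1 (hWcov ▸ mem_univ g)
  exact .rel _ _ ⟨n, ⟨(g, y'), hn, hg⟩, congrArg Prod.snd (hΨ.crossStep_eq h1U (hW n) hn hg)⟩

section Measurability

variable [MeasurableMul G] [lam.IsMulLeftInvariant] [SFinite lam] [SFinite ν]
  (hΨ : IsExtCrossSection lam μ U ν Ψ c) (hmp : ∀ g : G, MeasurePreserving (g • ·) μ μ)
include hΨ hmp

theorem iso_of_subset_smul_prod (g : G)
    {P : Set (G × Y)} (hP : MeasurableSet P) (hPU : P ⊆ (g • U) ×ˢ univ) :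
    MeasurableSet (Ψ '' P) ∧ c * μ (Ψ '' P) = lam.prod ν P := by
  set τ : G × Y → G × Y := fun p => (g * p.1, p.2)
  have hτ : MeasurePreserving τ (lam.prod ν) (lam.prod ν) :=
    (measurePreserving_mul_left lam g).prod (.id ν)
  have hτP : τ ⁻¹' P ⊆ U ×ˢ univ := fun p hp =>
    ⟨by simpa [mem_smul_set_iff_inv_smul_mem, τ] using (hPU hp).1, trivial⟩
  obtain ⟨hmeas, hmeasure⟩ := hΨ.iso _ hτP (hτ.measurable hP)
  have himg : Ψ '' P = (g⁻¹ • ·) ⁻¹' (Ψ '' (τ ⁻¹' P)) := by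
    ext x
    constructor
    · rintro ⟨⟨a, y⟩, hp, rfl⟩
      exact ⟨(g⁻¹ * a, y), by simpa [τ] using hp, by simp [hΨ.equivariant]⟩
    · rintro ⟨⟨a, y⟩, hp, hx⟩
      exact ⟨τ (a, y), hp, by simp [τ, hΨ.equivariant, hx]⟩
  rw [himg, (hmp g⁻¹).measure_preimage hmeas.nullMeasurableSet, hmeasure,
    hτ.measure_preimage hP.nullMeasurableSet]
  exact ⟨(hmp g⁻¹).measurable hmeas, rfl⟩

variable {e : ℕ → G} {T : Set (G × Y)} (hUm : MeasurableSet U) (he : ⋃ k, e k • U = univ)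
include hUm he

theorem measurableSet_image (hT : MeasurableSet T) : MeasurableSet (Ψ '' T) := by
  obtain ⟨p, hpm, -, hpU, rfl⟩ := exists_partition_subordinate_smul hUm he hT
  rw [image_iUnion]
  exact .iUnion fun k => (hΨ.iso_of_subset_smul_prod hmp (e k) (hpm k) (hpU k)).1

theorem mul_measure_image (hT : MeasurableSet T) (hinj : InjOn Ψ T) :
    c * μ (Ψ '' T) = lam.prod ν T := by
  obtain ⟨p, hpm, hpd, hpU, rfl⟩ := exists_partition_subordinate_smul hUm he hT
  have hpiece k := hΨ.iso_of_subset_smul_prod hmp (e k) (hpm k) (hpU k)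
  rw [image_iUnion, measure_iUnion (fun i j hij => (hpd hij).image hinj (subset_iUnion p i)
    (subset_iUnion p j)) fun k => (hpiece k).1, ← ENNReal.tsum_mul_left, measure_iUnion hpd hpm]
  exact tsum_congr fun k => (hpiece k).2

theorem measure_image_eq_of_smul_eq [MeasurableMul₂ G] [MeasurableInv G]
    [lam.IsMulRightInvariant] (hU0 : lam U ≠ 0) (hUtop : lam U ≠ ⊤) {g : Y → G} {φ : Y → Y}
    {S : Set Y} (hg : Measurable g) (hS : MeasurableSet S) (hφS : MeasurableSet (φ '' S))
    (hφ : InjOn φ S)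
    (hgφ : ∀ y ∈ S, g y • Ψ (1, y) = Ψ (1, φ y)) : ν (φ '' S) = ν S := by
  set T := {p : G × Y | p.2 ∈ S ∧ p.1 * (g p.2)⁻¹ ∈ U}
  have hshift : ∀ y ∈ S, ∀ h, Ψ (h, y) = Ψ (h * (g y)⁻¹, φ y) := by
    intro y hy h
    rw [hΨ.apply_eq_smul h, hΨ.apply_eq_smul _ (φ y), ← hgφ y hy, smul_smul, inv_mul_cancel_right]
  have hinj : InjOn Ψ T := by
    rintro ⟨h₁, y₁⟩ ⟨hy₁ : y₁ ∈ S, hu₁ : h₁ * (g y₁)⁻¹ ∈ U⟩ ⟨h₂, y₂⟩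
      ⟨hy₂ : y₂ ∈ S, hu₂ : h₂ * (g y₂)⁻¹ ∈ U⟩ heq
    rw [hshift y₁ hy₁, hshift y₂ hy₂] at heq
    obtain ⟨hh, hy⟩ := Prod.mk.inj <|
      hΨ.injOn (mk_mem_prod hu₁ trivial) (mk_mem_prod hu₂ trivial) heq
    obtain rfl := hφ hy₁ hy₂ hy
    rw [mul_right_cancel hh]
  have himg : Ψ '' T = Ψ '' (U ×ˢ (φ '' S)) := by
    ext x
    constructor
    · rintro ⟨⟨h, y⟩, ⟨hy, hu⟩, rfl⟩
      exact ⟨(h * (g y)⁻¹, φ y), ⟨hu, mem_image_of_mem φ hy⟩, (hshift y hy h).symm⟩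
    · rintro ⟨⟨u, _⟩, ⟨hu, y, hy, rfl⟩, rfl⟩
      exact ⟨(u * g y, y), ⟨hy, by simpa using hu⟩, by rw [hshift y hy, mul_inv_cancel_right]⟩
  have hT := hΨ.mul_measure_image hmp hUm he (measurableSet_setOf_mul_inv_mem hUm hS hg) hinj
  rw [himg, (hΨ.iso _ (prod_mono subset_rfl (subset_univ _)) (hUm.prod hφS)).2,
    Measure.prod_prod, measure_prod_setOf_mul_inv_mem lam ν hUm hS hg] at hT
  exact (ENNReal.mul_right_inj hU0 hUtop).1 hT

theorem measurableSet_crossDomain [MeasurableInv G] (hW : MeasurableSet W) :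
    MeasurableSet (crossDomain Ψ W) := by
  rw [hΨ.crossDomain_eq_preimage]
  exact hΨ.measurable_apply_one (hΨ.measurableSet_image hmp hUm he (hW.inv.prod .univ))

theorem measurable_crossStep_fst [MeasurableInv G] (h1U : (1 : G) ∈ U) (hWm : MeasurableSet W)
    (hW : ∀ a ∈ W, ∀ b ∈ W, a * b⁻¹ ∈ U) : Measurable fun y => (crossStep Ψ W y).1 := by
  intro t ht
  have hpre : (fun y => (crossStep Ψ W y).1) ⁻¹' t =
      crossDomain Ψ (W ∩ t) ∪ (crossDomain Ψ W)ᶜ ∩ {_y | (1 : G) ∈ t} := by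
    ext y
    by_cases hy : y ∈ crossDomain Ψ W
    · obtain ⟨ha, h⟩ := crossStep_spec hy
      constructor
      · exact fun hat => Or.inl ⟨_, ⟨ha, hat⟩, h⟩
      · rintro (⟨⟨g, y'⟩, ⟨hg, hgt⟩, h'⟩ | ⟨hn, -⟩)
        · rwa [mem_preimage, hΨ.crossStep_eq h1U hW hg h']
        · exact absurd hy hn
    · have hy' : y ∉ crossDomain Ψ (W ∩ t) := fun ⟨p, hp, h⟩ => hy ⟨p, hp.1, h⟩
      simp [crossStep_of_notMem hy, hy, hy']
  rw [hpre]
  exact (hΨ.measurableSet_crossDomain hmp hUm he (hWm.inter ht)).union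
    ((hΨ.measurableSet_crossDomain hmp hUm he hWm).compl.inter (.const _))

theorem measure_image_crossStep_snd [MeasurableMul₂ G] [MeasurableInv G]
    [lam.IsMulRightInvariant] (hU0 : lam U ≠ 0) (hUtop : lam U ≠ ⊤) (h1U : (1 : G) ∈ U)
    (hWm : MeasurableSet W) (hW : ∀ a ∈ W, ∀ b ∈ W, a * b⁻¹ ∈ U ∧ a⁻¹ * b ∈ U) {S : Set Y}
    (hSD : S ⊆ crossDomain Ψ W) (hS : MeasurableSet S) :
    MeasurableSet ((fun y => (crossStep Ψ W y).2) '' S) ∧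
      ν ((fun y => (crossStep Ψ W y).2) '' S) = ν S := by
  have hφS : MeasurableSet ((fun y => (crossStep Ψ W y).2) '' S) := by
    rw [hΨ.image_crossStep_snd h1U (fun a ha b hb => (hW a ha b hb).1) hSD]
    exact hΨ.measurable_apply_one (hΨ.measurableSet_image hmp hUm he (hWm.prod hS))
  refine ⟨hφS, hΨ.measure_image_eq_of_smul_eq hmp hUm he hU0 hUtop
    (hΨ.measurable_crossStep_fst hmp hUm he h1U hWm fun a ha b hb => (hW a ha b hb).1) hS hφS
    ((hΨ.injOn_crossStep_snd h1U fun a ha b hb => (hW a ha b hb).2).mono hSD)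
    fun y hy => (crossStep_spec (hSD hy)).2⟩

end Measurability

end IsExtCrossSection

theorem stmt12_general {G X Y : Type*} [Group G] [TopologicalSpace G] [IsTopologicalGroup G]
    [LocallyCompactSpace G] [SecondCountableTopology G]
    [MeasurableSpace G] [BorelSpace G]
    [MulAction G X] [MeasurableSpace X] [MeasurableSpace Y]
    (lam : Measure G) [lam.IsHaarMeasure] [lam.IsMulRightInvariant]
    (U : Set G) (hU : IsIdNbhd G U)
    (μ : Measure X)
    (hmp : ∀ g : G, MeasurePreserving (fun x : X => g • x) μ μ)
    (ν : Measure Y) [IsProbabilityMeasure ν]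
    (Ψ : G × Y → X) (c : ℝ≥0∞)
    (hcross : IsExtCrossSection lam μ U ν Ψ c) :
    ∃ (D : ℕ → Set Y) (φ : ℕ → Y → Y),
      (∀ j, MeasurableSet (D j)) ∧
      (∀ j, Set.InjOn (φ j) (D j)) ∧
      (∀ j, ∀ S ⊆ D j, MeasurableSet S →
        MeasurableSet (φ j '' S) ∧ ν (φ j '' S) = ν S) ∧
      (∀ j, ∀ y ∈ D j, ∃ g : G, g • Ψ (1, y) = Ψ (1, φ j y)) ∧
      ∃ Y₀ : Set Y, ν (Y₀ᶜ) = 0 ∧ ∀ y ∈ Y₀, ∀ y' ∈ Y₀,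
        ((∃ g : G, g • Ψ (1, y) = Ψ (1, y')) ↔
          Relation.EqvGen (fun a b => ∃ j, a ∈ D j ∧ φ j a = b) y y') := by
  obtain ⟨hUm, hUcomp, V, hVo, hV1, hVU⟩ := hU
  have hUn : U ∈ 𝓝 (1 : G) := Filter.mem_of_superset (hVo.mem_nhds hV1) hVU
  have h1U : (1 : G) ∈ U := mem_of_mem_nhds hUn
  have hU0 : lam U ≠ 0 := (Measure.measure_pos_of_mem_nhds lam hUn).ne'
  have hUtop : lam U ≠ ⊤ := ((measure_mono subset_closure).trans_lt hUcomp.measure_lt_top).ne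
  obtain ⟨e, he⟩ := exists_seq_iUnion_smul_eq_univ hUn
  obtain ⟨W, hWo, hWcov, hW⟩ := exists_isOpen_seq_cover_mul_inv_mem hUn
  refine ⟨fun n => crossDomain Ψ (W n), fun n y => (crossStep Ψ (W n) y).2,
    fun n => hcross.measurableSet_crossDomain hmp hUm he (hWo n).measurableSet,
    fun n => hcross.injOn_crossStep_snd h1U fun a ha b hb => (hW n a ha b hb).2,
    fun n S hSD hS => hcross.measure_image_crossStep_snd hmp hUm he hU0 hUtop h1U
      (hWo n).measurableSet (hW n) hSD hS,
    fun n y hy => ⟨_, (crossStep_spec hy).2⟩, univ, by simp, fun y _ y' _ =>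
    hcross.exists_smul_eq_iff_eqvGen h1U hWcov (fun n a ha b hb => (hW n a ha b hb).1) y y'⟩

/-- The cross equivalence relation: there is a countable family of measurable,
measure-preserving partial bijections `φ_j : D_j → Y` of `(Y, ν)` whose graphs consist of
pairs in the same `G`-orbit (through `Ψ(id_G, ·)`), and such that the smallest equivalence
relation containing the graphs of the `φ_j` coincides, on a conull subset of `Y`, with
`R_Y = {(y, y') : ∃ g ∈ G, g • Ψ(id_G, y) = Ψ(id_G, y')}`. -/
theorem stmt12 {G X Y : Type*} [Group G] [TopologicalSpace G] [IsTopologicalGroup G]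
    [LocallyCompactSpace G] [SecondCountableTopology G]
    [MeasurableSpace G] [BorelSpace G]
    [MulAction G X] [MeasurableSpace X] [MeasurableSpace Y]
    (lam : Measure G) [lam.IsHaarMeasure] [lam.IsMulRightInvariant]
    (U : Set G) (hU : IsIdNbhd G U)
    (μ : Measure X) [IsProbabilityMeasure μ] [μ.IsComplete]
    (hmp : ∀ g : G, MeasurePreserving (fun x : X => g • x) μ μ)
    (hcont : ∀ A : Set X, MeasurableSet A → ∀ ε : ℝ≥0∞, 0 < ε →
      ∃ V : Set G, IsIdNbhd G V ∧ ∀ g ∈ V, μ (A ∆ (g • A)) ≤ ε)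
    (hmeasact : ∀ A : Set X, MeasurableSet A →
      NullMeasurableSet ((fun p : G × X => p.1 • p.2) ⁻¹' A) (lam.prod μ))
    (ν : Measure Y) [IsProbabilityMeasure ν]
    (Ψ : G × Y → X) (c : ℝ≥0∞) (hc0 : 0 < c) (hctop : c < ⊤)
    (hcross : IsExtCrossSection lam μ U ν Ψ c) :
    ∃ (D : ℕ → Set Y) (φ : ℕ → Y → Y),
      (∀ j, MeasurableSet (D j)) ∧
      (∀ j, Set.InjOn (φ j) (D j)) ∧
      (∀ j, ∀ S ⊆ D j, MeasurableSet S →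
        MeasurableSet (φ j '' S) ∧ ν (φ j '' S) = ν S) ∧
      (∀ j, ∀ y ∈ D j, ∃ g : G, g • Ψ (1, y) = Ψ (1, φ j y)) ∧
      ∃ Y₀ : Set Y, ν (Y₀ᶜ) = 0 ∧ ∀ y ∈ Y₀, ∀ y' ∈ Y₀,
        ((∃ g : G, g • Ψ (1, y) = Ψ (1, y')) ↔
          Relation.EqvGen (fun a b => ∃ j, a ∈ D j ∧ φ j a = b) y y') :=
  stmt12_general lam U hU μ hmp ν Ψ c hcross
end

section
/- Let G be a locally compact second countable group with a left Haar measure. For every neighborhood V of the identity and every compact subset A ⊆ G there exists a symmetric neighborhood W of the identity such that for every lattice Γ ≤ G with Γ ∩ V = {id_G} and every subgroup K of G with K ⊆ A, every element of Γ ∩ W·K has finite order. -/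
open MeasureTheory Filter Topology Pointwise
open scoped ENNReal

section

variable {G : Type*} [Group G] [TopologicalSpace G] [IsTopologicalGroup G]

theorem exists_pos_pow_mem_of_forall_pow_mem_compact {B U : Set G} (hB : IsCompact B)
    (hU : U ∈ 𝓝 (1 : G)) {k : G} (hk : ∀ n : ℕ, k ^ (n + 1) ∈ B) :
    ∃ N : ℕ, 0 < N ∧ k ^ N ∈ U := by
  obtain ⟨x, -, hx⟩ := hB.exists_mapClusterPt_of_frequently (l := atTop)
    (Frequently.of_forall hk)
  obtain ⟨V₀, hV₀, hV₀U⟩ := exists_nhds_split_inv hU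
  have hnear : (· * x⁻¹) ⁻¹' V₀ ∈ 𝓝 x := nhds_translation_mul_inv x ▸ preimage_mem_comap hV₀
  have hfreq := frequently_atTop.1 (hx.frequently hnear)
  obtain ⟨m, -, hm⟩ := hfreq 0
  obtain ⟨n, hmn, hn⟩ := hfreq (m + 1)
  refine ⟨n - m, by omega, ?_⟩
  have hquot : k ^ (n - m) = (k ^ (n + 1) * x⁻¹) / (k ^ (m + 1) * x⁻¹) := by
    rw [show n - m = (n + 1) - (m + 1) by omega, pow_sub k (by omega : m + 1 ≤ n + 1)]
    simp [div_eq_mul_inv, mul_assoc]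
  exact hquot ▸ hV₀U _ hn _ hm

theorem exists_nhds_one_forall_exists_pow_mul_mem {P U : Set G} (hP : IsCompact P)
    (hU : IsOpen U) (hpow : ∀ k ∈ P, ∃ N : ℕ, 0 < N ∧ k ^ N ∈ U) :
    ∀ᶠ w in 𝓝 (1 : G), ∀ k ∈ P, ∃ N : ℕ, 0 < N ∧ (w * k) ^ N ∈ U := by
  refine hP.eventually_forall_of_forall_eventually fun k hk => ?_
  obtain ⟨N, hN, hkN⟩ := hpow k hk
  have hcont : Continuous fun p : G × G => (p.1 * p.2) ^ N := by fun_prop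
  have hmem : (fun p : G × G => (p.1 * p.2) ^ N) ⁻¹' U ∈ 𝓝 ((1 : G), k) :=
    hcont.continuousAt.preimage_mem_nhds (hU.mem_nhds (by simpa using hkN))
  exact Filter.mem_of_superset hmem fun p hp => ⟨N, hN, hp⟩

theorem isCompact_setOf_forall_pow_mem_closure {A : Set G} (hA : IsCompact A) :
    IsCompact {k : G | ∀ n : ℕ, k ^ (n + 1) ∈ closure A} := by
  refine hA.closure.of_isClosed_subset ?_ fun k hk => by simpa using hk 0
  simp only [Set.ofPred_forall]
  exact isClosed_iInter fun n => isClosed_closure.preimage (continuous_pow (n + 1))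

theorem exists_isIdNbhd_inv_eq_subset [LocallyCompactSpace G] [MeasurableSpace G]
    [OpensMeasurableSpace G] {W₁ : Set G} (hW₁ : W₁ ∈ 𝓝 (1 : G)) :
    ∃ W : Set G, IsIdNbhd G W ∧ W⁻¹ = W ∧ W ⊆ W₁ := by
  obtain ⟨C, hC, hC1⟩ := exists_compact_mem_nhds (1 : G)
  obtain ⟨U, hUsub, hUopen, hU1⟩ := mem_nhds_iff.1 (Filter.inter_mem hW₁ hC1)
  have hWopen : IsOpen (U ∩ U⁻¹) := hUopen.inter hUopen.inv
  refine ⟨U ∩ U⁻¹, ⟨hWopen.measurableSet, ?_, U ∩ U⁻¹, hWopen, ⟨hU1, by simpa using hU1⟩,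
    subset_rfl⟩, by rw [Set.inter_inv, inv_inv, Set.inter_comm], fun w hw => (hUsub hw.1).1⟩
  exact hC.closure_of_subset fun w hw => (hUsub hw.1).2

end

theorem stmt19_general {G : Type*} [Group G] [TopologicalSpace G] [IsTopologicalGroup G]
    [LocallyCompactSpace G]
    [MeasurableSpace G] [BorelSpace G]
    (lam : Measure G)
    (V : Set G) (hV : IsIdNbhd G V) (A : Set G) (hA : IsCompact A) :
    ∃ W : Set G, IsIdNbhd G W ∧ W⁻¹ = W ∧
      ∀ Γ : Subgroup G, DiscreteTopology ↥Γ →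
        (∃ D : Set G, MeasurableSet D ∧
          IsFundamentalDomain (Subgroup.op Γ) D lam ∧ lam D < ⊤) →
        (Γ : Set G) ∩ V = {1} →
        ∀ K : Subgroup G, (K : Set G) ⊆ A →
          ∀ γ ∈ (Γ : Set G) ∩ (W * (K : Set G)), IsOfFinOrder γ := by
  obtain ⟨-, -, V₁, hV₁open, hV₁1, hV₁V⟩ := hV
  have hW₁ := exists_nhds_one_forall_exists_pow_mul_mem (isCompact_setOf_forall_pow_mem_closure hA)
    hV₁open fun k hk => exists_pos_pow_mem_of_forall_pow_mem_compact hA.closure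
      (hV₁open.mem_nhds hV₁1) hk
  obtain ⟨W, hW, hWinv, hWW₁⟩ := exists_isIdNbhd_inv_eq_subset hW₁
  refine ⟨W, hW, hWinv, ?_⟩
  rintro Γ - - hΓV K hKA γ ⟨hγΓ, w, hw, k, hk, rfl⟩
  obtain ⟨N, hN, hpowN⟩ :=
    hWW₁ hw k fun n => subset_closure (hKA (pow_mem (SetLike.mem_coe.1 hk) (n + 1)))
  have hpowΓV : (w * k) ^ N ∈ (Γ : Set G) ∩ V := ⟨pow_mem (SetLike.mem_coe.1 hγΓ) N, hV₁V hpowN⟩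
  exact isOfFinOrder_iff_pow_eq_one.2 ⟨N, hN, by simpa [hΓV] using hpowΓV⟩

/-- For every neighborhood `V` of the identity and every compact `A ⊆ G` there is a symmetric
neighborhood `W` of the identity such that for every lattice `Γ ≤ G` with `Γ ∩ V = {1}` and
every subgroup `K ⊆ A`, every element of `Γ ∩ W • K` has finite order. -/
theorem stmt19 {G : Type*} [Group G] [TopologicalSpace G] [IsTopologicalGroup G]
    [LocallyCompactSpace G] [SecondCountableTopology G]
    [MeasurableSpace G] [BorelSpace G]
    (lam : Measure G) [lam.IsHaarMeasure]
    (V : Set G) (hV : IsIdNbhd G V) (A : Set G) (hA : IsCompact A) :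
    ∃ W : Set G, IsIdNbhd G W ∧ W⁻¹ = W ∧
      ∀ Γ : Subgroup G, DiscreteTopology ↥Γ →
        (∃ D : Set G, MeasurableSet D ∧
          IsFundamentalDomain (Subgroup.op Γ) D lam ∧ lam D < ⊤) →
        (Γ : Set G) ∩ V = {1} →
        ∀ K : Subgroup G, (K : Set G) ⊆ A →
          ∀ γ ∈ (Γ : Set G) ∩ (W * (K : Set G)), IsOfFinOrder γ :=
  stmt19_general lam V hV A hA
end
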